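/- arXiv:0704.0614 — 5 statements merged into one kernel-verified Lean document; each statement's English description precedes it below -/
import Mathlib

section
/- If Φ : M_n(ℂ) → M_n(ℂ) is a linear map such that Φ maps the set of nilpotent matrices into itself and, more generally, Φ(A) has the same characteristic polynomial as A for every A in each fiber (i.e., σ(Φ(A)) = σ(A) whenever this makes sense), and if Φ preserves each fiber T_z = {A : characteristic polynomial coefficients equal z}, then Φ is injective. Formally: if Φ is linear, n ≥ 2, and Φ(T_z) ⊆ T_z for every z ∈ ℂ^n (where T_z is the set of matrices with prescribed characteristic polynomial coefficients z), then ker Φ = 0. -/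
open Matrix Polynomial

/-! If `Φ A = 0` then `det (B + s • A) = det B` for all `B` and `s`, since `B + s • A` and `B`
have the same image under `Φ`. For invertible `N` this gives `det (1 + s • (N * A)) = 1`, whose
linear coefficient in `s` is `trace (N * A)`. Every matrix is a scalar plus an invertible matrix,
so `trace (B * A) = 0` for all `B`, and `A = 0` by nondegeneracy of the trace form. -/

namespace Matrix

variable {n : Type*} [Fintype n] [DecidableEq n]

theorem trace_eq_zero_of_det_one_add_smul_eq_one {R : Type*} [CommRing R] [IsDomain R]
    [Infinite R] {M : Matrix n n R} (h : ∀ s : R, det (1 + s • M) = 1) : trace M = 0 := by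
  have hconst : det (1 + (X : R[X]) • M.map C) = C 1 := by
    refine Polynomial.funext fun s => ?_
    simpa [eval_det, ← smul_eq_mul_diagonal] using h s
  rw [← coeff_det_one_add_X_smul_one, hconst, coeff_C_of_ne_zero one_ne_zero]

variable {K : Type*} [Field K] [Infinite K]

theorem eq_zero_of_trace_unit_mul_eq_zero {A : Matrix n n K}
    (h : ∀ N : Matrix n n K, IsUnit N → trace (N * A) = 0) : A = 0 := by
  refine ext_iff_trace_mul_left.mpr fun B => ?_
  obtain ⟨c, hc⟩ := (finite_spectrum B).exists_notMem
  have htrace : trace A = 0 := by simpa using h 1 isUnit_one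
  have hB : B = algebraMap K _ c - (algebraMap K _ c - B) := (sub_sub_cancel _ _).symm
  rw [hB, sub_mul, trace_sub, h _ (spectrum.notMem_iff.mp hc), Algebra.algebraMap_eq_smul_one,
    smul_mul_assoc, one_mul, trace_smul, htrace]
  simp

theorem eq_zero_of_det_add_smul_eq {A : Matrix n n K}
    (h : ∀ (B : Matrix n n K) (s : K), det (B + s • A) = det B) : A = 0 := by
  refine eq_zero_of_trace_unit_mul_eq_zero fun N hN => ?_
  refine trace_eq_zero_of_det_one_add_smul_eq_one fun s => ?_
  have hNN : N * N⁻¹ = 1 := mul_nonsing_inv N ((isUnit_iff_isUnit_det N).mp hN)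
  calc det (1 + s • (N * A)) = det (N * (N⁻¹ + s • A)) := by
        rw [mul_add, hNN, mul_smul_comm]
    _ = 1 := by rw [det_mul, h, ← det_mul, hNN, det_one]

end Matrix

theorem linear_fiber_preserving_injective_general (n : ℕ)
    (Φ : Matrix (Fin n) (Fin n) ℂ →ₗ[ℂ] Matrix (Fin n) (Fin n) ℂ)
    (hΦ : ∀ A : Matrix (Fin n) (Fin n) ℂ, (Φ A).charpoly = A.charpoly) :
    LinearMap.ker Φ = ⊥ := by
  refine LinearMap.ker_eq_bot'.mpr fun A hA => eq_zero_of_det_add_smul_eq fun B s => ?_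
  have hcharpoly : (B + s • A).charpoly = B.charpoly := by
    rw [← hΦ, ← hΦ B, map_add, map_smul, hA, smul_zero, add_zero]
  rw [det_eq_sign_charpoly_coeff, det_eq_sign_charpoly_coeff, hcharpoly]

/-- a linear map `Φ : M_n(ℂ) → M_n(ℂ)` (with `n ≥ 2`) preserving every
fiber of the characteristic-polynomial map (i.e. `Φ(A)` always has the same
characteristic polynomial as `A`) is injective: `ker Φ = 0`. -/
theorem linear_fiber_preserving_injective (n : ℕ) (hn : 2 ≤ n)
    (Φ : Matrix (Fin n) (Fin n) ℂ →ₗ[ℂ] Matrix (Fin n) (Fin n) ℂ)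
    (hΦ : ∀ A : Matrix (Fin n) (Fin n) ℂ, (Φ A).charpoly = A.charpoly) :
    LinearMap.ker Φ = ⊥ :=
  linear_fiber_preserving_injective_general n Φ hΦ
end

section
/- Let n ≥ 2, let A ∈ M_n(ℂ) be a nonzero nilpotent matrix, and choose linearly independent v₁, v₂ with A v₂ = v₁, A v₁ = 0. Extend to a basis (v₁,…,v_n) and define V ∈ M_n(ℂ) by V v₂ = v₁, V v₁ = v₂, V v_j = 0 for j ≥ 3. Then for every ζ ∈ ℂ, (A + ζV)² v_j = ζ(1 + ζ) v_j for j = 1, 2; consequently |ζ||1 + ζ| ≤ ρ(A + ζV)², where ρ is the spectral radius. -/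
/-!
On span{v₁, v₂} the matrix `B = A + ζV` acts as `v₁ ↦ ζ v₂`, `v₂ ↦ (1 + ζ) v₁`, so `B²` has the
eigenvector `v₁` with eigenvalue `ζ(1 + ζ)`. By the spectral mapping theorem this eigenvalue is
`z²` for some `z` in the spectrum of `B`, whence `|ζ(1 + ζ)| = |z|² ≤ ρ(B)²`.
-/

open Matrix

/-- Spectral radius of a complex matrix. -/
noncomputable def rho {n : ℕ} (A : Matrix (Fin n) (Fin n) ℂ) : ℝ :=
  sSup ((fun z : ℂ => ‖z‖) '' spectrum ℂ A)

theorem Matrix.mem_spectrum_of_mulVec_eq_smul {ι K : Type*} [Fintype ι] [DecidableEq ι] [Field K]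
    {M : Matrix ι ι K} {μ : K} {v : ι → K} (hv : v ≠ 0) (hMv : M *ᵥ v = μ • v) :
    μ ∈ spectrum K M := by
  rw [← spectrum_toLin']
  exact (Module.End.hasEigenvalue_of_hasEigenvector
    ⟨Module.End.mem_eigenspace_iff.mpr hMv, hv⟩).mem_spectrum

theorem Matrix.mulVec_mul_self_eq_smul_of_swap {ι R : Type*} [Fintype ι] [CommRing R]
    {B : Matrix ι ι R} {u w : ι → R} {a c : R} (hu : B *ᵥ u = a • w) (hw : B *ᵥ w = c • u) :
    (B * B) *ᵥ u = (a * c) • u := by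
  rw [← mulVec_mulVec, hu, mulVec_smul, hw, smul_smul]

theorem norm_le_rho {n : ℕ} {B : Matrix (Fin n) (Fin n) ℂ} {z : ℂ} (hz : z ∈ spectrum ℂ B) :
    ‖z‖ ≤ rho B :=
  le_csSup (B.finite_spectrum.image _).bddAbove ⟨z, hz, rfl⟩

theorem norm_le_rho_pow_of_mem_spectrum_pow {n k : ℕ} (hk : 0 < k) {B : Matrix (Fin n) (Fin n) ℂ}
    {μ : ℂ} (hμ : μ ∈ spectrum ℂ (B ^ k)) : ‖μ‖ ≤ rho B ^ k := by
  rw [spectrum.map_pow_of_pos B hk] at hμ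
  obtain ⟨z, hz, rfl⟩ := hμ
  rw [norm_pow]
  exact pow_le_pow_left₀ (norm_nonneg z) (norm_le_rho hz) k

/-- with `A` nonzero nilpotent, `A v₂ = v₁`, `A v₁ = 0` for the first two
vectors of a basis `(v₁,…,v_n)`, and `V` defined by `V v₂ = v₁`, `V v₁ = v₂`,
`V v_j = 0` for `j ≥ 3`, one has `(A + ζV)² v_j = ζ(1+ζ) v_j` for `j = 1,2`, and
consequently `|ζ||1+ζ| ≤ ρ(A + ζV)²`. -/
theorem perturbation_eigen (n : ℕ) (hn : 2 ≤ n)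
    (A V : Matrix (Fin n) (Fin n) ℂ)
    (b : Module.Basis (Fin n) ℂ (Fin n → ℂ))
    (hA1 : A.mulVec (b ⟨1, by omega⟩) = b ⟨0, by omega⟩)
    (hA0 : A.mulVec (b ⟨0, by omega⟩) = 0)
    (hV1 : V.mulVec (b ⟨1, by omega⟩) = b ⟨0, by omega⟩)
    (hV0 : V.mulVec (b ⟨0, by omega⟩) = b ⟨1, by omega⟩) :
    ∀ ζ : ℂ,
      ((A + ζ • V) * (A + ζ • V)).mulVec (b ⟨0, by omega⟩)
        = (ζ * (1 + ζ)) • b ⟨0, by omega⟩ ∧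
      ((A + ζ • V) * (A + ζ • V)).mulVec (b ⟨1, by omega⟩)
        = (ζ * (1 + ζ)) • b ⟨1, by omega⟩ ∧
      ‖ζ‖ * ‖1 + ζ‖ ≤ (rho (A + ζ • V)) ^ 2 := by
  intro ζ
  have hB0 : (A + ζ • V) *ᵥ b ⟨0, by omega⟩ = ζ • b ⟨1, by omega⟩ := by
    rw [add_mulVec, hA0, smul_mulVec, hV0, zero_add]
  have hB1 : (A + ζ • V) *ᵥ b ⟨1, by omega⟩ = (1 + ζ) • b ⟨0, by omega⟩ := by
    rw [add_mulVec, hA1, smul_mulVec, hV1, add_smul, one_smul]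
  have hsq0 := mulVec_mul_self_eq_smul_of_swap hB0 hB1
  have hsq1 := mulVec_mul_self_eq_smul_of_swap hB1 hB0
  rw [mul_comm (1 + ζ)] at hsq1
  refine ⟨hsq0, hsq1, ?_⟩
  have hμ := mem_spectrum_of_mulVec_eq_smul (b.ne_zero _) hsq0
  rw [← sq] at hμ
  rw [← norm_mul]
  exact norm_le_rho_pow_of_mem_spectrum_pow two_pos hμ
end

section
/- If A ∈ M_n(ℂ) is non-derogatory, then the differential of the map σ : M_n(ℂ) → ℂ^n (sending a matrix to the vector of coefficients of its characteristic polynomial) has rank n at A; in particular the fiber {B : σ(B) = σ(A)} is a smooth (complex) submanifold of dimension n² − n near A. -/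
open Matrix

attribute [local instance] Matrix.normedAddCommGroup Matrix.normedSpace

/-- A matrix is non-derogatory if its minimal polynomial equals its characteristic
polynomial. -/
def IsNonDerogatory {n : ℕ} (A : Matrix (Fin n) (Fin n) ℂ) : Prop :=
  A.charpoly = minpoly ℂ A

/-- The characteristic-coefficient map `σ : M_n(ℂ) → ℂⁿ`,
`σ_j(A) = (−1)^j ·` (coefficient of `λ^{n−j}` in `det(λI − A)`), `j = 1,…,n`. -/
noncomputable def sigmaMap (n : ℕ) (A : Matrix (Fin n) (Fin n) ℂ) : Fin n → ℂ :=
  fun j => (-1 : ℂ) ^ (j.val + 1) * A.charpoly.coeff (n - (j.val + 1))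

/-!
Pick a cyclic vector `v` for `A`: for each root `a` of the minimal polynomial `μ`,
`ker (μ / (X - a))(A)` is a proper subspace; a vector outside their finite union has
annihilator `(μ)`, and as `deg μ = n` the vectors `v, Av, …, Aⁿ⁻¹v` form a basis.
Given `q` of degree `< n`, let `H` kill `Aⁱv` for `i < n - 1` and send `Aⁿ⁻¹v` to `-q(A)v`.
Then `v, (A + tH)v, …` agree with `v, Av, …` up to the `(n-1)`-st power, and
`charpoly A + t q` annihilates `v` under `A + tH`; as `v` is cyclic this forces
`charpoly (A + tH) = charpoly A + t q`. Hence `σ` is affine along the line `A + tH`, with any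
prescribed slope, and `dσ_A` is onto `ℂⁿ`.
-/

open Polynomial

theorem Polynomial.aeval_eq_sum_fin {R S : Type*} [CommSemiring R] [Semiring S] [Algebra R S]
    (s : S) {n : ℕ} {p : R[X]} (hp : p.degree < n) :
    aeval s p = ∑ i : Fin n, p.coeff i • s ^ (i : ℕ) := by
  rw [aeval_def, eval₂_eq_sum, ← sum_fin _ (by simp) hp]
  simp only [Algebra.smul_def]

theorem Polynomial.coeff_degreeLTEquiv_symm {R : Type*} [CommRing R] {n : ℕ} (c : Fin n → R)
    (i : Fin n) : ((degreeLTEquiv R n).symm c : R[X]).coeff i = c i :=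
  congrFun ((degreeLTEquiv R n).apply_symm_apply c) i

namespace Matrix

section Cyclic

variable {R : Type*} [CommRing R] {n : ℕ}

theorem linearIndependent_pow_mulVec_iff (A : Matrix (Fin n) (Fin n) R) (v : Fin n → R) :
    LinearIndependent R (fun i : Fin n => (A ^ (i : ℕ)) *ᵥ v) ↔
      ∀ p : R[X], p.degree < n → aeval A p *ᵥ v = 0 → p = 0 := by
  rw [Fintype.linearIndependent_iff]
  constructor
  · intro h p hp hpv
    have hcoeff : ∀ i : Fin n, p.coeff i = 0 := h _ <| by
      simpa only [aeval_eq_sum_fin A hp, sum_mulVec, smul_mulVec] using hpv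
    ext k
    by_cases hk : k < n
    · exact hcoeff ⟨k, hk⟩
    · exact coeff_eq_zero_of_degree_lt (hp.trans_le (by exact_mod_cast not_lt.mp hk))
  · intro h c hc i
    have hp := mem_degreeLT.mp ((degreeLTEquiv R n).symm c).2
    have hp0 := h _ hp <| by
      simpa only [aeval_eq_sum_fin A hp, sum_mulVec, smul_mulVec, coeff_degreeLTEquiv_symm]
        using hc
    rw [← coeff_degreeLTEquiv_symm c i, hp0, coeff_zero]

theorem charpoly_eq_of_linearIndependent_pow_mulVec [Nontrivial R]
    {A : Matrix (Fin n) (Fin n) R} {v : Fin n → R}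
    (hv : LinearIndependent R (fun i : Fin n => (A ^ (i : ℕ)) *ᵥ v))
    {p : R[X]} (hp : p.Monic) (hpn : p.natDegree = n) (hpv : aeval A p *ᵥ v = 0) :
    A.charpoly = p := by
  have hdeg : (A.charpoly - p).degree < n := by
    have h := degree_sub_lt_left (q := p) (by rw [degree_eq_natDegree hp.ne_zero, hpn,
      charpoly_degree_eq_dim, Fintype.card_fin]) A.charpoly_monic.ne_zero
      (by rw [A.charpoly_monic.leadingCoeff, hp.leadingCoeff])
    rwa [charpoly_degree_eq_dim, Fintype.card_fin] at h
  refine sub_eq_zero.mp ((linearIndependent_pow_mulVec_iff A v).mp hv _ hdeg ?_)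
  rw [map_sub, sub_mulVec, aeval_self_charpoly, zero_mulVec, hpv, sub_zero]

end Cyclic

section Perturbation

variable {ι R : Type*} [Fintype ι] [DecidableEq ι] [CommSemiring R] {A H : Matrix ι ι R}
  {v : ι → R} {m : ℕ}

theorem add_pow_mulVec_eq_pow_mulVec (hH : ∀ i < m, H *ᵥ (A ^ i *ᵥ v) = 0) {i : ℕ}
    (hi : i ≤ m) : (A + H) ^ i *ᵥ v = A ^ i *ᵥ v := by
  induction i with
  | zero => rfl
  | succ i ih =>
    rw [pow_succ', ← mulVec_mulVec, ih (by omega), add_mulVec, hH i (by omega), add_zero,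
      mulVec_mulVec, ← pow_succ']

theorem aeval_add_mulVec_eq (hH : ∀ i < m, H *ᵥ (A ^ i *ᵥ v) = 0) {p : R[X]}
    (hp : p.natDegree ≤ m + 1) :
    aeval (A + H) p *ᵥ v = aeval A p *ᵥ v + p.coeff (m + 1) • H *ᵥ (A ^ m *ᵥ v) := by
  have htop : (A + H) ^ (m + 1) *ᵥ v = A ^ (m + 1) *ᵥ v + H *ᵥ (A ^ m *ᵥ v) := by
    rw [pow_succ', ← mulVec_mulVec, add_pow_mulVec_eq_pow_mulVec hH le_rfl, add_mulVec,
      mulVec_mulVec, ← pow_succ']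
  have hlt := Nat.lt_succ_of_le hp
  rw [aeval_eq_sum_range' hlt, aeval_eq_sum_range' hlt, sum_mulVec, sum_mulVec,
    Finset.sum_range_succ _ (m + 1), Finset.sum_range_succ _ (m + 1), smul_mulVec, smul_mulVec,
    htop, smul_add, add_assoc]
  congr 1
  exact Finset.sum_congr rfl fun i hi => by
    rw [smul_mulVec, smul_mulVec,
      add_pow_mulVec_eq_pow_mulVec hH (Finset.mem_range_succ_iff.mp hi)]

end Perturbation

variable {K : Type*} [Field K] {n : ℕ}

theorem exists_forall_aeval_minpoly_divByMonic_mulVec_ne_zero [Infinite K]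
    (A : Matrix (Fin n) (Fin n) K) :
    ∃ v : Fin n → K, ∀ a : K, (minpoly K A).IsRoot a →
      aeval A (minpoly K A /ₘ (X - C a)) *ᵥ v ≠ 0 := by
  classical
  set μ := minpoly K A
  have hμ0 : μ ≠ 0 := minpoly.ne_zero A.isIntegral
  let kerQuot (a : μ.roots.toFinset) := LinearMap.ker (toLin' (aeval A (μ /ₘ (X - C (a : K)))))
  have hkerQuot_ne_top (a : μ.roots.toFinset) : kerQuot a ≠ ⊤ := by
    have hfac := mul_divByMonic_eq_iff_isRoot.mpr
      ((mem_roots hμ0).mp (Multiset.mem_toFinset.mp a.2))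
    have hquot : (μ /ₘ (X - C (a : K))).Monic :=
      (monic_X_sub_C _).of_mul_monic_left (by rw [hfac]; exact minpoly.monic A.isIntegral)
    rw [Ne, LinearMap.ker_eq_top, LinearEquiv.map_eq_zero_iff]
    refine minpoly.aeval_ne_zero_of_dvdNotUnit_minpoly A.isIntegral hquot
      ⟨hquot.ne_zero, X - C (a : K), not_isUnit_X_sub_C _, ?_⟩
    rw [mul_comm, hfac]
  obtain ⟨v, hv⟩ : ∃ v, v ∉ ⋃ a ∈ Finset.univ, (kerQuot a : Set (Fin n → K)) := by
    have := Submodule.iUnion_ssubset_of_forall_ne_top_of_card_lt Finset.univ kerQuot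
      hkerQuot_ne_top (by simp)
    simpa [Set.ssubset_univ_iff, Set.eq_univ_iff_forall] using this
  refine ⟨v, fun a ha hav => hv ?_⟩
  have haμ : a ∈ μ.roots.toFinset := Multiset.mem_toFinset.mpr ((mem_roots hμ0).mpr ha)
  refine Set.mem_biUnion (Finset.mem_univ ⟨a, haμ⟩) ?_
  change toLin' _ v = 0
  exact (toLin'_apply _ v).trans hav

theorem linearIndependent_pow_mulVec_of_aeval_minpoly_divByMonic_mulVec_ne_zero [IsAlgClosed K]
    {A : Matrix (Fin n) (Fin n) K} (hA : (minpoly K A).natDegree = n) {v : Fin n → K}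
    (hv : ∀ a : K, (minpoly K A).IsRoot a → aeval A (minpoly K A /ₘ (X - C a)) *ᵥ v ≠ 0) :
    LinearIndependent K (fun i : Fin n => (A ^ (i : ℕ)) *ᵥ v) := by
  classical
  refine (linearIndependent_pow_mulVec_iff A v).mpr fun p hp hpv => ?_
  set μ := minpoly K A
  have hμ0 : μ ≠ 0 := minpoly.ne_zero A.isIntegral
  by_contra hp0
  -- `g := gcd p μ` also kills `v`; a root `a` of `μ / g` then gives `g ∣ μ / (X - a)`.
  have hgv : aeval A (EuclideanDomain.gcd p μ) *ᵥ v = 0 := by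
    have hμA : aeval A μ = 0 := minpoly.aeval K A
    rw [EuclideanDomain.gcd_eq_gcd_ab, mul_comm p, mul_comm μ, map_add, map_mul, map_mul,
      add_mulVec, ← mulVec_mulVec, ← mulVec_mulVec, hpv, hμA, zero_mulVec, mulVec_zero,
      mulVec_zero, add_zero]
  have hgp := natDegree_le_of_dvd (EuclideanDomain.gcd_dvd_left p μ) hp0
  obtain ⟨h, hgh⟩ := EuclideanDomain.gcd_dvd_right p μ
  generalize EuclideanDomain.gcd p μ = g at hgv hgp hgh
  have hh0 : h ≠ 0 := by rintro rfl; exact hμ0 (by rw [hgh, mul_zero])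
  have hg0 : g ≠ 0 := by rintro rfl; exact hμ0 (by rw [hgh, zero_mul])
  have hhdeg : h.degree ≠ 0 := by
    intro hdeg
    have := congrArg natDegree hgh
    rw [natDegree_mul hg0 hh0, natDegree_eq_zero_iff_degree_le_zero.mpr hdeg.le] at this
    have := (natDegree_lt_iff_degree_lt hp0).mpr hp
    omega
  obtain ⟨a, ha⟩ := IsAlgClosed.exists_root h hhdeg
  obtain ⟨h', hh'⟩ := dvd_iff_isRoot.mpr ha
  have haμ : μ.IsRoot a := by rw [hgh, IsRoot.def, eval_mul, ha, mul_zero]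
  have hquot : μ /ₘ (X - C a) = g * h' := by
    refine mul_left_cancel₀ (X_sub_C_ne_zero a) ?_
    rw [mul_divByMonic_eq_iff_isRoot.mpr haμ, hgh, hh']
    ring
  refine hv a haμ ?_
  rw [hquot, mul_comm, map_mul, ← mulVec_mulVec, hgv, mulVec_zero]

theorem exists_linearIndependent_pow_mulVec [IsAlgClosed K] (A : Matrix (Fin n) (Fin n) K)
    (hA : (minpoly K A).natDegree = n) :
    ∃ v : Fin n → K, LinearIndependent K (fun i : Fin n => (A ^ (i : ℕ)) *ᵥ v) :=
  let ⟨v, hv⟩ := exists_forall_aeval_minpoly_divByMonic_mulVec_ne_zero A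
  ⟨v, linearIndependent_pow_mulVec_of_aeval_minpoly_divByMonic_mulVec_ne_zero hA hv⟩

theorem exists_mulVec_eq_of_linearIndependent {ι : Type*} [Fintype ι] [DecidableEq ι]
    {w : ι → ι → K} (hw : LinearIndependent K w) (u : ι → ι → K) :
    ∃ H : Matrix ι ι K, ∀ i, H *ᵥ w i = u i := by
  have hcard := (Module.finrank_fintype_fun_eq_card K (η := ι)).symm
  let b := basisOfLinearIndependentOfCardEqFinrank' _ hw hcard
  refine ⟨LinearMap.toMatrix' (b.constr K u), fun i => ?_⟩
  rw [← toLin'_apply, toLin'_toMatrix',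
    ← coe_basisOfLinearIndependentOfCardEqFinrank' w hw hcard, b.constr_basis]

theorem exists_charpoly_add_smul_eq {A : Matrix (Fin n) (Fin n) K} {v : Fin n → K}
    (hv : LinearIndependent K (fun i : Fin n => (A ^ (i : ℕ)) *ᵥ v)) {q : K[X]}
    (hq : q.degree < n) :
    ∃ H : Matrix (Fin n) (Fin n) K, ∀ t : K, (A + t • H).charpoly = A.charpoly + C t * q := by
  cases n with
  | zero => exact ⟨0, fun t => by simp_all⟩
  | succ m =>
    let images : Fin (m + 1) → Fin (m + 1) → K := Pi.single (Fin.last m) (-(aeval A q *ᵥ v))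
    obtain ⟨H, hHw⟩ := exists_mulVec_eq_of_linearIndependent hv images
    refine ⟨H, fun t => ?_⟩
    have hH : ∀ i < m, (t • H) *ᵥ (A ^ i *ᵥ v) = 0 := fun i hi => by
      rw [smul_mulVec, hHw ⟨i, by omega⟩]
      have hne : (⟨i, by omega⟩ : Fin (m + 1)) ≠ Fin.last m :=
        Fin.ne_of_val_ne (by rw [Fin.val_mk, Fin.val_last]; omega)
      simp [images, hne]
    have hdeg : (C t * q).degree < A.charpoly.degree := by
      rw [charpoly_degree_eq_dim, Fintype.card_fin, ← smul_eq_C_mul]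
      exact (degree_smul_le t q).trans_lt hq
    have hpdeg : (A.charpoly + C t * q).natDegree = m + 1 := by
      rw [natDegree_add_eq_left_of_degree_lt hdeg, charpoly_natDegree_eq_dim, Fintype.card_fin]
    have hmonic := A.charpoly_monic.add_of_left hdeg
    have hlead : (A.charpoly + C t * q).coeff (m + 1) = 1 := by
      simpa only [hpdeg] using hmonic.coeff_natDegree
    have hlast := hHw (Fin.last m)
    rw [Fin.val_last] at hlast
    apply charpoly_eq_of_linearIndependent_pow_mulVec (v := v)
    · have hpow : (fun i : Fin (m + 1) => (A + t • H) ^ (i : ℕ) *ᵥ v) =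
          fun i : Fin (m + 1) => A ^ (i : ℕ) *ᵥ v :=
        funext fun i => add_pow_mulVec_eq_pow_mulVec hH (Nat.lt_succ_iff.mp i.2)
      rwa [hpow]
    · exact hmonic
    · exact hpdeg
    · rw [aeval_add_mulVec_eq hH hpdeg.le, hlead, one_smul, smul_mulVec, hlast]
      simp [images, aeval_self_charpoly, ← Algebra.smul_def, smul_mulVec]

theorem charpoly_coeff_eq_eval_univ {R ι : Type*} [CommRing R] [Fintype ι] [DecidableEq ι]
    (A : Matrix ι ι R) (k : ℕ) :
    A.charpoly.coeff k = MvPolynomial.eval (fun p : ι × ι => A p.1 p.2)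
      ((charpoly.univ R ι).coeff k) := by
  have h := charpoly.univ_map_eval₂Hom ι (RingHom.id R) fun p : ι × ι => A p.1 p.2
  rw [show Matrix.of (Function.curry fun p : ι × ι => A p.1 p.2) = A from rfl] at h
  rw [← h, coeff_map]
  rfl

theorem differentiable_charpoly_coeff {𝕜 ι : Type*} [NontriviallyNormedField 𝕜]
    [CompleteSpace 𝕜] [Fintype ι] [DecidableEq ι] (k : ℕ) :
    Differentiable 𝕜 fun A : Matrix ι ι 𝕜 => A.charpoly.coeff k := by
  rw [funext fun A : Matrix ι ι 𝕜 => charpoly_coeff_eq_eval_univ A k]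
  exact fun A => (AnalyticOnNhd.eval_linearMap'
    (fun p : ι × ι => entryLinearMap 𝕜 𝕜 p.1 p.2) _ A trivial).differentiableAt

end Matrix

theorem fderiv_apply_eq_of_forall_add_smul {𝕜 E F : Type*} [NontriviallyNormedField 𝕜]
    [NormedAddCommGroup E] [NormedSpace 𝕜 E] [NormedAddCommGroup F] [NormedSpace 𝕜 F]
    {f : E → F} {x v : E} {y : F} (hf : DifferentiableAt 𝕜 f x)
    (h : ∀ t : 𝕜, f (x + t • v) = f x + t • y) : fderiv 𝕜 f x v = y := by
  rw [← hf.lineDeriv_eq_fderiv]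
  refine HasLineDerivAt.lineDeriv ?_
  simp only [HasLineDerivAt, h]
  simpa using ((hasDerivAt_id (0 : 𝕜)).smul_const y).const_add (f x)

theorem differentiable_sigmaMap (n : ℕ) : Differentiable ℂ (sigmaMap n) :=
  differentiable_pi.mpr fun j =>
    (Matrix.differentiable_charpoly_coeff _).const_mul ((-1 : ℂ) ^ (j.val + 1))

theorem exists_sigmaMap_add_smul {n : ℕ} {A : Matrix (Fin n) (Fin n) ℂ} (hA : IsNonDerogatory A)
    (y : Fin n → ℂ) : ∃ H : Matrix (Fin n) (Fin n) ℂ, ∀ t : ℂ,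
      sigmaMap n (A + t • H) = sigmaMap n A + t • y := by
  obtain ⟨v, hv⟩ := A.exists_linearIndependent_pow_mulVec <| by
    rw [← hA, charpoly_natDegree_eq_dim, Fintype.card_fin]
  set q : ℂ[X] :=
    ((degreeLTEquiv ℂ n).symm fun i => (-1) ^ ((Fin.rev i : ℕ) + 1) * y (Fin.rev i) : ℂ[X])
  obtain ⟨H, hH⟩ := exists_charpoly_add_smul_eq hv
    (q := q) (mem_degreeLT.mp ((degreeLTEquiv ℂ n).symm _).2)
  refine ⟨H, fun t => funext fun j => ?_⟩
  have hj : n - (j.val + 1) = Fin.rev j := by rw [Fin.val_rev]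
  simp only [sigmaMap, hH, Pi.add_apply, Pi.smul_apply, coeff_add, coeff_C_mul, hj, q,
    coeff_degreeLTEquiv_symm, Fin.rev_rev, smul_eq_mul]
  have hsign : ((-1 : ℂ) ^ (j.val + 1)) * (-1) ^ (j.val + 1) = 1 := by
    rw [← mul_pow, neg_one_mul, neg_neg, one_pow]
  linear_combination t * y j * hsign

/-- at a non-derogatory matrix `A`, the differential of `σ` has
rank `n`. -/
theorem sigma_rank_at_nonderogatory (n : ℕ) (A : Matrix (Fin n) (Fin n) ℂ)
    (hA : IsNonDerogatory A) :
    LinearMap.rank ((fderiv ℂ (sigmaMap n) A :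
      Matrix (Fin n) (Fin n) ℂ →L[ℂ] (Fin n → ℂ)) :
      Matrix (Fin n) (Fin n) ℂ →ₗ[ℂ] (Fin n → ℂ)) = n := by
  have hsurj : Function.Surjective (fderiv ℂ (sigmaMap n) A) := fun y => by
    obtain ⟨H, hH⟩ := exists_sigmaMap_add_smul hA y
    exact ⟨H, fderiv_apply_eq_of_forall_add_smul (differentiable_sigmaMap n A) hH⟩
  rw [LinearMap.rank, LinearMap.range_eq_top.mpr hsurj, rank_top, rank_fin_fun]
end

section
/- If a holomorphic self-map F of the spectral unit ball Ω_n (n ≥ 2) satisfies σ(F(A)) = π_n(f(ζ_1),…,f(ζ_n)) whenever σ(A) = π_n(ζ_1,…,ζ_n), with f ∈ O(𝔻,𝔻), f(0)=0 and f'(0) ≠ 0, then the only nilpotent matrix mapped to 0 by F is 0: F⁻¹(0) ∩ T_0 ⊆ {0}. -/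
/-!
Suppose `A ≠ 0` is nilpotent and `F A = 0`. Pick `u` with `A u ≠ 0 = A² u` and a functional
`φ` with `φ u = 0`, `φ (A u) = 1`. The rank-one perturbation `γ e = A + e² u φᵀ` has eigenvalues
`e, -e, 0, …, 0`, so by the compatibility hypothesis `F (γ e)` has eigenvalues
`f e, f (-e), 0, …, 0` and `tr (F (γ e))² = f(e)² + f(-e)²`. As `γ'(0) = 0` and
`F (γ 0) = 0`, the left side is `o(e²)`, whereas the right side is `2 f'(0)² e² + o(e²)`;
hence `f'(0) = 0`.
-/

open Matrix Polynomial Set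

attribute [local instance] Matrix.normedAddCommGroup Matrix.normedSpace

/-- The spectral unit ball `Ω_n`. -/
def specBall (n : ℕ) : Set (Matrix (Fin n) (Fin n) ℂ) := {A | rho A < 1}

open Filter Topology

namespace Matrix

variable {ι : Type*} [Fintype ι] [DecidableEq ι]

theorem exists_mulVec_ne_zero {R : Type*} [Semiring R] {M : Matrix ι ι R} (hM : M ≠ 0) :
    ∃ x, M *ᵥ x ≠ 0 := by
  contrapose! hM
  exact ext_of_mulVec_single fun i => by rw [hM, zero_mulVec]

theorem exists_mulVec_mulVec_eq_zero_of_isNilpotent {R : Type*} [Semiring R]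
    {A : Matrix ι ι R} (hA : IsNilpotent A) (hA0 : A ≠ 0) :
    ∃ u, A *ᵥ u ≠ 0 ∧ A *ᵥ (A *ᵥ u) = 0 := by
  have : Nontrivial (Matrix ι ι R) := nontrivial_of_ne A 0 hA0
  set k := nilpotencyClass A
  have hk : 2 ≤ k := by
    have := pos_nilpotencyClass_iff.mpr hA
    have : k ≠ 1 := fun h => hA0 (eq_zero_of_nilpotencyClass_eq_one h)
    omega
  obtain ⟨x, hx⟩ := exists_mulVec_ne_zero (pow_pred_nilpotencyClass hA)
  refine ⟨A ^ (k - 2) *ᵥ x, ?_, ?_⟩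
  · rwa [mulVec_mulVec, ← pow_succ', show k - 2 + 1 = k - 1 by omega]
  · rw [mulVec_mulVec, mulVec_mulVec, ← sq, ← pow_add, show 2 + (k - 2) = k by omega,
      pow_nilpotencyClass hA, zero_mulVec]

theorem exists_dotProduct_eq_zero_and_eq_one {K : Type*} [Field K] {u v : ι → K}
    (hv : v ∉ Submodule.span K {u}) : ∃ φ : ι → K, φ ⬝ᵥ u = 0 ∧ φ ⬝ᵥ v = 1 := by
  obtain ⟨f, hfv, hfu⟩ := Submodule.exists_dual_map_eq_bot_of_notMem hv inferInstance
  replace hfu : f u = 0 := by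
    simpa [hfu] using Submodule.mem_map_of_mem (f := f) (Submodule.mem_span_singleton_self u)
  refine ⟨(f v)⁻¹ • (dotProductEquiv K ι).symm f, ?_, ?_⟩ <;>
    simp [← dotProductEquiv_apply_apply, hfu, hfv]

theorem exists_mulVec_and_dotProduct_of_isNilpotent {K : Type*} [Field K]
    {A : Matrix ι ι K} (hA : IsNilpotent A) (hA0 : A ≠ 0) :
    ∃ u φ : ι → K, A *ᵥ (A *ᵥ u) = 0 ∧ φ ⬝ᵥ u = 0 ∧ φ ⬝ᵥ (A *ᵥ u) = 1 := by
  obtain ⟨u, hAu, hAAu⟩ := exists_mulVec_mulVec_eq_zero_of_isNilpotent hA hA0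
  suffices A *ᵥ u ∉ Submodule.span K {u} by
    obtain ⟨φ, hφu, hφAu⟩ := exists_dotProduct_eq_zero_and_eq_one this
    exact ⟨u, φ, hAAu, hφu, hφAu⟩
  rw [Submodule.mem_span_singleton]
  rintro ⟨c, hc⟩
  have hc0 : c = 0 := by
    refine (smul_eq_zero.mp ?_).resolve_right hAu
    rw [← mulVec_smul, hc, hAAu]
  exact hAu (by rw [← hc, hc0, zero_smul])

theorem eval_charpoly_eq_det_smul_one_sub {R : Type*} [CommRing R] (M : Matrix ι ι R) (t : R) :
    M.charpoly.eval t = (t • 1 - M).det := by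
  rw [eval_charpoly, scalar_apply, smul_one_eq_diagonal]

theorem det_one_add_vecMulVec {R : Type*} [CommRing R] (u v : ι → R) :
    (1 + vecMulVec u v).det = 1 + v ⬝ᵥ u := by
  rw [vecMulVec_eq (Fin 1), det_one_add_replicateCol_mul_replicateRow]

theorem X_sq_mul_charpoly_add_smul_vecMulVec {K : Type*} [Field K] [Infinite K]
    {A : Matrix ι ι K} {u φ : ι → K} (hAAu : A *ᵥ (A *ᵥ u) = 0) (hφu : φ ⬝ᵥ u = 0)
    (hφAu : φ ⬝ᵥ (A *ᵥ u) = 1) (w : K) :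
    X ^ 2 * (A + w • vecMulVec u φ).charpoly = A.charpoly * (X ^ 2 - C w) := by
  refine eq_of_infinite_eval_eq _ _ ((Set.finite_singleton 0).infinite_compl.mono ?_)
  intro x (hx : x ≠ 0)
  -- `v = (x - A)⁻¹ u`: the Neumann series for `(x - A)⁻¹ u` stops after two terms.
  set v := x⁻¹ • u + x⁻¹ ^ 2 • (A *ᵥ u)
  have hv : (x • 1 - A) *ᵥ v = u := by
    simp only [v, sub_mulVec, smul_mulVec, one_mulVec, mulVec_add, mulVec_smul, hAAu]
    match_scalars
    · field_simp
    · field_simp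
      ring
  have hfactor :
      x • 1 - (A + w • vecMulVec u φ) = (x • 1 - A) * (1 + vecMulVec (-w • v) φ) := by
    rw [Matrix.mul_add, Matrix.mul_one, mul_vecMulVec, mulVec_smul, hv, smul_vecMulVec]
    module
  have hφv : φ ⬝ᵥ v = x⁻¹ ^ 2 := by
    simp [v, dotProduct_add, dotProduct_smul, hφu, hφAu]
  simp only [Set.mem_ofPred_eq, eval_mul, eval_pow, eval_X, eval_sub, eval_C,
    eval_charpoly_eq_det_smul_one_sub]
  rw [hfactor, det_mul, det_one_add_vecMulVec, dotProduct_smul, hφv, smul_eq_mul]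
  field_simp
  ring

theorem charpoly_add_sq_smul_vecMulVec {K : Type*} [Field K] [Infinite K] {m : ℕ}
    {A : Matrix (Fin (m + 2)) (Fin (m + 2)) K} (hA : IsNilpotent A) {u φ : Fin (m + 2) → K}
    (hAAu : A *ᵥ (A *ᵥ u) = 0) (hφu : φ ⬝ᵥ u = 0) (hφAu : φ ⬝ᵥ (A *ᵥ u) = 1) (e : K) :
    (A + e ^ 2 • vecMulVec u φ).charpoly =
      ∏ i, (X - C ((Fin.cons e (Fin.cons (-e) 0) : Fin (m + 2) → K) i)) := by
  have hcharpolyA : A.charpoly = X ^ (m + 2) := by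
    simpa [sub_eq_zero] using (isNilpotent_charpoly_sub_pow_of_isNilpotent hA).eq_zero
  apply mul_left_cancel₀ (pow_ne_zero 2 (X_ne_zero (R := K)))
  rw [X_sq_mul_charpoly_add_smul_vecMulVec hAAu hφu hφAu, hcharpolyA]
  simp [Fin.prod_univ_succ]
  ring

theorem charpoly_mul_self_of_charpoly_eq_prod {K : Type*} [Field K] [IsAlgClosed K]
    {M : Matrix ι ι K} {ζ : ι → K} (h : M.charpoly = ∏ i, (X - C (ζ i))) :
    (M * M).charpoly = ∏ i, (X - C (ζ i ^ 2)) := by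
  refine eq_of_infinite_eval_eq _ _ (Set.infinite_univ.mono fun μ _ => ?_)
  obtain ⟨y, rfl⟩ := IsAlgClosed.exists_pow_nat_eq μ two_pos
  have hfactor : y ^ 2 • (1 : Matrix ι ι K) - M * M = (y • 1 - M) * -((-y) • 1 - M) := by
    simp only [Matrix.mul_neg, Matrix.sub_mul, Matrix.mul_sub, Matrix.smul_mul,
      Matrix.mul_smul, Matrix.one_mul, Matrix.mul_one]
    module
  have hsign : (-1 : K) ^ Fintype.card ι = ∏ _i : ι, (-1) := by simp
  rw [Set.mem_ofPred_eq, eval_charpoly_eq_det_smul_one_sub, hfactor, det_mul, det_neg,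
    ← eval_charpoly_eq_det_smul_one_sub, ← eval_charpoly_eq_det_smul_one_sub, h, hsign]
  simp only [eval_prod, eval_sub, eval_X, eval_C, ← Finset.prod_mul_distrib]
  exact Finset.prod_congr rfl fun i _ => by ring

theorem trace_eq_sum_of_charpoly_eq_prod {R : Type*} [CommRing R] [Nontrivial R]
    {M : Matrix ι ι R} {ζ : ι → R} (h : M.charpoly = ∏ i, (X - C (ζ i))) :
    M.trace = ∑ i, ζ i := by
  cases isEmpty_or_nonempty ι
  · simp
  · rw [trace_eq_neg_charpoly_coeff, h, ← Finset.card_univ,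
      prod_X_sub_C_coeff_card_pred _ _ Finset.univ_nonempty.card_pos, neg_neg]

end Matrix

theorem mem_specBall_of_charpoly_eq_prod {n : ℕ} {M : Matrix (Fin n) (Fin n) ℂ}
    {ζ : Fin n → ℂ} (h : M.charpoly = ∏ i, (X - C (ζ i))) (hζ : ∀ i, ‖ζ i‖ < 1) :
    M ∈ specBall n := by
  have hspec : ∀ z ∈ spectrum ℂ M, ∃ i, z = ζ i := by
    intro z hz
    rw [mem_spectrum_iff_isRoot_charpoly, h, IsRoot, eval_prod, Finset.prod_eq_zero_iff] at hz
    obtain ⟨i, -, hi⟩ := hz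
    exact ⟨i, by simpa [sub_eq_zero] using hi⟩
  have hsub : (fun z : ℂ => ‖z‖) '' spectrum ℂ M ⊆ range fun i => ‖ζ i‖ := by
    rintro _ ⟨z, hz, rfl⟩
    obtain ⟨i, rfl⟩ := hspec z hz
    exact ⟨i, rfl⟩
  change sSup ((fun z : ℂ => ‖z‖) '' spectrum ℂ M) < 1
  rcases ((fun z : ℂ => ‖z‖) '' spectrum ℂ M).eq_empty_or_nonempty with hempty | hne
  · simp [hempty]
  · rw [((finite_range _).subset hsub).csSup_lt_iff hne]
    rintro _ hx
    obtain ⟨i, rfl⟩ := hsub hx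
    exact hζ i

section Calculus

variable {𝕜 : Type*} [NontriviallyNormedField 𝕜]

theorem hasDerivAt_comp_of_mapsTo_of_hasDerivAt_zero {E G : Type*} [NormedAddCommGroup E]
    [NormedSpace 𝕜 E] [NormedAddCommGroup G] [NormedSpace 𝕜 G] {g : E → G} {γ : 𝕜 → E}
    {s : Set E} {t : Set 𝕜} {x : 𝕜} (hg : DifferentiableWithinAt 𝕜 g s (γ x))
    (hγ : HasDerivAt γ 0 x) (ht : t ∈ 𝓝 x) (hmaps : MapsTo γ t s) :
    HasDerivAt (g ∘ γ) 0 x :=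
  ((hg.hasFDerivWithinAt.comp_hasDerivWithinAt x hγ.hasDerivWithinAt hmaps).hasDerivAt
    ht).congr_deriv (map_zero _)

theorem HasDerivAt.tendsto_inv_smul_nhdsNE_zero {E : Type*} [NormedAddCommGroup E]
    [NormedSpace 𝕜 E] {g : 𝕜 → E} {b : E} (hg : HasDerivAt g b 0) (hg0 : g 0 = 0) :
    Tendsto (fun e => e⁻¹ • g e) (𝓝[≠] 0) (𝓝 b) := by
  simpa [hg0] using hg.tendsto_slope_zero

theorem eq_zero_of_sq_add_sq_eq_trace_mul_self [CharZero 𝕜] {ι : Type*} [Fintype ι]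
    {f : 𝕜 → 𝕜} {a : 𝕜} {H : 𝕜 → Matrix ι ι 𝕜}
    (hf : HasDerivAt f a 0) (hf0 : f 0 = 0) (hH : HasDerivAt H 0 0) (hH0 : H 0 = 0)
    (h : ∀ᶠ e in 𝓝 0, f e ^ 2 + f (-e) ^ 2 = trace (H e * H e)) : a = 0 := by
  have hf_neg : HasDerivAt (fun e => f (-e)) (-a) 0 := by
    rw [← neg_zero] at hf
    have := hf.comp 0 (hasDerivAt_neg 0)
    rwa [mul_neg_one] at this
  have hlhs : Tendsto (fun e : 𝕜 => (e⁻¹ • f e) ^ 2 + (e⁻¹ • f (-e)) ^ 2) (𝓝[≠] 0)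
      (𝓝 (a ^ 2 + (-a) ^ 2)) :=
    ((hf.tendsto_inv_smul_nhdsNE_zero hf0).pow 2).add
      ((hf_neg.tendsto_inv_smul_nhdsNE_zero (by simp [hf0])).pow 2)
  have hrhs : Tendsto (fun e : 𝕜 => trace ((e⁻¹ • H e) * (e⁻¹ • H e))) (𝓝[≠] 0) (𝓝 0) := by
    have hH' := hH.tendsto_inv_smul_nhdsNE_zero hH0
    have hcont : Continuous fun M : Matrix ι ι 𝕜 => trace (M * M) :=
      (continuous_id.matrix_mul continuous_id).matrix_trace
    simpa only [Function.comp_def, Matrix.zero_mul, trace_zero] using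
      (hcont.tendsto 0).comp hH'
  have heq : (fun e : 𝕜 => (e⁻¹ • f e) ^ 2 + (e⁻¹ • f (-e)) ^ 2)
      =ᶠ[𝓝[≠] 0] fun e => trace ((e⁻¹ • H e) * (e⁻¹ • H e)) := by
    filter_upwards [nhdsWithin_le_nhds h] with e he
    rw [smul_mul_smul, trace_smul, ← he]
    simp only [smul_eq_mul]
    ring
  have : a ^ 2 + (-a) ^ 2 = 0 := tendsto_nhds_unique (hlhs.congr' heq) hrhs
  simpa using this

end Calculus

theorem preimage_zero_inter_nilpotents_general (n : ℕ) (hn : 2 ≤ n)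
    (F : Matrix (Fin n) (Fin n) ℂ → Matrix (Fin n) (Fin n) ℂ)
    (hFhol : DifferentiableOn ℂ F (specBall n))
    (f : ℂ → ℂ)
    (hfhol : DifferentiableOn ℂ f (Metric.ball 0 1))
    (hf0 : f 0 = 0) (hf' : deriv f 0 ≠ 0)
    (hcompat : ∀ A ∈ specBall n, ∀ ζ : Fin n → ℂ,
      A.charpoly = ∏ i, (X - C (ζ i)) →
      (F A).charpoly = ∏ i, (X - C (f (ζ i)))) :
    ∀ A ∈ specBall n, IsNilpotent A → F A = 0 → A = 0 := by
  intro A hA hnil hFA0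
  by_contra hA0
  obtain ⟨m, rfl⟩ := Nat.exists_eq_add_of_le' hn
  obtain ⟨u, φ, hAAu, hφu, hφAu⟩ := exists_mulVec_and_dotProduct_of_isNilpotent hnil hA0
  set γ : ℂ → Matrix (Fin (m + 2)) (Fin (m + 2)) ℂ := fun e => A + e ^ 2 • vecMulVec u φ
  set ζ : ℂ → Fin (m + 2) → ℂ := fun e => Fin.cons e (Fin.cons (-e) 0)
  have hγ : ∀ e, (γ e).charpoly = ∏ i, (X - C (ζ e i)) :=
    charpoly_add_sq_smul_vecMulVec hnil hAAu hφu hφAu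
  have hγmaps : MapsTo γ (Metric.ball 0 1) (specBall (m + 2)) := by
    intro e he
    refine mem_specBall_of_charpoly_eq_prod (hγ e) fun i => ?_
    rw [mem_ball_zero_iff] at he
    refine Fin.cases ?_ (Fin.cases ?_ fun j => ?_) i <;> simp [ζ, he]
  have hγ' : HasDerivAt γ 0 0 :=
    (((hasDerivAt_pow 2 (0 : ℂ)).smul_const (vecMulVec u φ)).const_add A).congr_deriv (by simp)
  have hFγ : HasDerivAt (F ∘ γ) 0 0 :=
    hasDerivAt_comp_of_mapsTo_of_hasDerivAt_zero
      (by rw [show γ 0 = A by simp [γ]]; exact hFhol A hA) hγ' (Metric.ball_mem_nhds 0 one_pos)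
      hγmaps
  have htrace : ∀ᶠ e in 𝓝 0, f e ^ 2 + f (-e) ^ 2 = trace (F (γ e) * F (γ e)) := by
    filter_upwards [Metric.ball_mem_nhds (0 : ℂ) one_pos] with e he
    rw [trace_eq_sum_of_charpoly_eq_prod
      (charpoly_mul_self_of_charpoly_eq_prod (hcompat _ (hγmaps he) _ (hγ e)))]
    simp [ζ, Fin.sum_univ_succ, hf0]
  have hf : HasDerivAt f (deriv f 0) 0 :=
    (hfhol.differentiableAt (Metric.ball_mem_nhds 0 one_pos)).hasDerivAt
  exact hf' (eq_zero_of_sq_add_sq_eq_trace_mul_self hf hf0 hFγ (by simp [γ, hFA0]) htrace)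

/-- if a holomorphic self-map `F` of `Ω_n` (`n ≥ 2`) satisfies
`σ(F(A)) = π_n(f(ζ₁),…,f(ζ_n))` whenever `σ(A) = π_n(ζ₁,…,ζ_n)` for some
`f ∈ O(𝔻,𝔻)` with `f(0) = 0` and `f'(0) ≠ 0`, then the only nilpotent matrix mapped
to `0` by `F` is `0`. -/
theorem preimage_zero_inter_nilpotents (n : ℕ) (hn : 2 ≤ n)
    (F : Matrix (Fin n) (Fin n) ℂ → Matrix (Fin n) (Fin n) ℂ)
    (hFhol : DifferentiableOn ℂ F (specBall n))
    (hFmap : MapsTo F (specBall n) (specBall n))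
    (f : ℂ → ℂ)
    (hfhol : DifferentiableOn ℂ f (Metric.ball 0 1))
    (hfmap : MapsTo f (Metric.ball 0 1) (Metric.ball 0 1))
    (hf0 : f 0 = 0) (hf' : deriv f 0 ≠ 0)
    (hcompat : ∀ A ∈ specBall n, ∀ ζ : Fin n → ℂ,
      A.charpoly = ∏ i, (X - C (ζ i)) →
      (F A).charpoly = ∏ i, (X - C (f (ζ i)))) :
    ∀ A ∈ specBall n, IsNilpotent A → F A = 0 → A = 0 :=
  preimage_zero_inter_nilpotents_general n hn F hFhol f hfhol hf0 hf' hcompat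
end

section
/- Let n ≥ 2 and F be a holomorphic self-map of the spectral unit ball Ω_n with F(0) = 0, satisfying σ(F(A)) = π_n(f(ζ_1),…,f(ζ_n)) whenever σ(A) = π_n(ζ_1,…,ζ_n), for some f ∈ O(𝔻,𝔻) with f'(0) = α ≠ 0. Then for every V ∈ M_n(ℂ), the matrix (1/α)·F'(0)(V) has the same characteristic polynomial as V; consequently F'(0) is a linear isomorphism of M_n(ℂ). -/
/-!
Compatibility along the ray `t ↦ t • V` says that `t⁻¹ • F (t • V)` has eigenvalues
`t⁻¹ * f (t * ζᵢ)`, where `ζ` are the eigenvalues of `V` (this needs `f 0 = 0`, which is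
compatibility at `A = 0`). Letting `t → 0`, `F'(0) V` has eigenvalues `α * ζᵢ`, so `α⁻¹ • F'(0)`
preserves characteristic polynomials, in particular determinants. A nonzero `V` in the kernel of
such a map would give `det (V + W) = det W` for all `W`, which fails for `W = U - V` with `U`
invertible and `U x = V x ≠ 0`.
-/

open Matrix Polynomial Set

attribute [local instance] Matrix.normedAddCommGroup Matrix.normedSpace

open Filter Topology

theorem Matrix.norm_le_card_mul_norm_of_mem_spectrum {K ι : Type*} [NormedField K]
    [Fintype ι] [DecidableEq ι] {A : Matrix ι ι K} {μ : K} (hμ : μ ∈ spectrum K A) :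
    ‖μ‖ ≤ Fintype.card ι * ‖A‖ := by
  rw [← Matrix.spectrum_toLin', ← Module.End.hasEigenvalue_iff_mem_spectrum] at hμ
  obtain ⟨k, hk⟩ := eigenvalue_mem_ball hμ
  calc ‖μ‖ ≤ ‖A k k‖ + ∑ j ∈ Finset.univ.erase k, ‖A k j‖ := by
        linarith [norm_le_insert' μ (A k k), mem_closedBall_iff_norm.mp hk]
    _ = ∑ j, ‖A k j‖ := Finset.add_sum_erase _ (fun j => ‖A k j‖) (Finset.mem_univ k)
    _ ≤ ∑ _j : ι, ‖A‖ := Finset.sum_le_sum fun j _ => norm_entry_le_entrywise_sup_norm A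
    _ = Fintype.card ι * ‖A‖ := by simp

theorem rho_le_mul_norm {n : ℕ} (A : Matrix (Fin n) (Fin n) ℂ) : rho A ≤ n * ‖A‖ :=
  Real.sSup_le
    (by rintro _ ⟨μ, hμ, rfl⟩; simpa using norm_le_card_mul_norm_of_mem_spectrum hμ)
    (by positivity)

theorem specBall_mem_nhds_zero (n : ℕ) : specBall n ∈ 𝓝 (0 : Matrix (Fin n) (Fin n) ℂ) := by
  have hopen : IsOpen {A : Matrix (Fin n) (Fin n) ℂ | n * ‖A‖ < 1} :=
    isOpen_lt (by fun_prop) continuous_const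
  filter_upwards [hopen.mem_nhds (by simp)] with A hA using (rho_le_mul_norm A).trans_lt hA

theorem Multiset.exists_map_univ_eq {ι α : Type*} [Fintype ι] (s : Multiset α)
    (h : s.card = Fintype.card ι) : ∃ μ : ι → α, Finset.univ.val.map μ = s := by
  let e := Fintype.equivFinOfCardEq (h.symm.trans (Multiset.length_toList s).symm)
  refine ⟨s.toList.get ∘ e, ?_⟩
  rw [← Multiset.map_map, Multiset.map_univ_val_equiv, Fin.univ_val_map, List.ofFn_get,
    Multiset.coe_toList]

section Charpoly

variable {K ι : Type*} [Field K] [Fintype ι]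

theorem Polynomial.exists_eq_prod_X_sub_C [IsAlgClosed K] {p : K[X]} (hp : p.Monic)
    (hdeg : p.natDegree = Fintype.card ι) : ∃ μ : ι → K, p = ∏ i, (X - C (μ i)) := by
  have hsplit := IsAlgClosed.splits p
  obtain ⟨μ, hμ⟩ := p.roots.exists_map_univ_eq (ι := ι)
    (hsplit.natDegree_eq_card_roots ▸ hdeg)
  refine ⟨μ, ?_⟩
  rw [hsplit.eq_prod_roots_of_monic hp, ← hμ, Multiset.map_map]
  rfl

variable [DecidableEq ι]

theorem Matrix.exists_charpoly_eq_prod [IsAlgClosed K] (M : Matrix ι ι K) :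
    ∃ μ : ι → K, M.charpoly = ∏ i, (X - C (μ i)) :=
  exists_eq_prod_X_sub_C M.charpoly_monic M.charpoly_natDegree_eq_dim

theorem Matrix.charpoly_smul_of_eq_prod [Infinite K] {M : Matrix ι ι K} {μ : ι → K} {c : K}
    (hc : c ≠ 0) (h : M.charpoly = ∏ i, (X - C (μ i))) :
    (c • M).charpoly = ∏ i, (X - C (c * μ i)) := by
  refine Polynomial.funext fun z => ?_
  have hscale : scalar ι z - c • M = c • (scalar ι (c⁻¹ * z) - M) := by
    rw [smul_sub, scalar_apply, scalar_apply, ← diagonal_smul, Pi.smul_def, smul_eq_mul,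
      mul_inv_cancel_left₀ hc]
  rw [eval_charpoly, hscale, det_smul, ← eval_charpoly, h]
  simp only [eval_prod, eval_sub, eval_X, eval_C]
  rw [← Finset.card_univ, ← Finset.prod_const, ← Finset.prod_mul_distrib]
  exact Finset.prod_congr rfl fun i _ => by field_simp

theorem Matrix.charpoly_eq_prod_of_tendsto [Infinite K] [TopologicalSpace K] [IsTopologicalRing K]
    [T2Space K] {α : Type*} {l : Filter α} [l.NeBot] {M : α → Matrix ι ι K} {M₀ : Matrix ι ι K}
    {μ : α → ι → K} {μ₀ : ι → K} (hM : Tendsto M l (𝓝 M₀)) (hμ : Tendsto μ l (𝓝 μ₀))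
    (h : ∀ᶠ a in l, (M a).charpoly = ∏ i, (X - C (μ a i))) :
    M₀.charpoly = ∏ i, (X - C (μ₀ i)) := by
  refine Polynomial.funext fun z => ?_
  have hdet : Tendsto (fun a => (M a).charpoly.eval z) l (𝓝 (M₀.charpoly.eval z)) := by
    simp only [eval_charpoly]
    exact (continuous_id.matrix_det.tendsto _).comp (tendsto_const_nhds.sub hM)
  have hprod : Tendsto (fun a => (∏ i, (X - C (μ a i))).eval z) l
      (𝓝 ((∏ i, (X - C (μ₀ i))).eval z)) := by
    simp only [eval_prod, eval_sub, eval_X, eval_C]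
    exact tendsto_finsetProd _ fun i _ => tendsto_const_nhds.sub (tendsto_pi_nhds.1 hμ i)
  exact tendsto_nhds_unique (hdet.congr' (h.mono fun a ha => by rw [ha])) hprod

end Charpoly

theorem HasFDerivAt.tendsto_inv_smul_comp_smul {𝕜 E G : Type*} [NontriviallyNormedField 𝕜]
    [NormedAddCommGroup E] [NormedSpace 𝕜 E] [NormedAddCommGroup G] [NormedSpace 𝕜 G]
    {F : E → G} {L : E →L[𝕜] G} (hF : HasFDerivAt F L 0) (hF0 : F 0 = 0) (v : E) :
    Tendsto (fun t : 𝕜 => t⁻¹ • F (t • v)) (𝓝[≠] 0) (𝓝 (L v)) := by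
  have hray : HasDerivAt (fun t : 𝕜 => F (t • v)) (L v) 0 := by
    have hline := (hasDerivAt_id (0 : 𝕜)).smul_const v
    rw [one_smul] at hline
    exact (zero_smul 𝕜 v ▸ hF).comp_hasDerivAt 0 hline
  simpa [hF0] using hray.tendsto_slope_zero

section Compatible

variable {𝕜 ι : Type*} [NontriviallyNormedField 𝕜] [Fintype ι] [DecidableEq ι]

def CharpolyCompatibleOn (F : Matrix ι ι 𝕜 → Matrix ι ι 𝕜) (f : 𝕜 → 𝕜)
    (S : Set (Matrix ι ι 𝕜)) : Prop :=
  ∀ A ∈ S, ∀ ζ : ι → 𝕜, A.charpoly = ∏ i, (X - C (ζ i)) →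
    (F A).charpoly = ∏ i, (X - C (f (ζ i)))

variable {F : Matrix ι ι 𝕜 → Matrix ι ι 𝕜} {f : 𝕜 → 𝕜} {S : Set (Matrix ι ι 𝕜)}

theorem CharpolyCompatibleOn.apply_zero [Nonempty ι] (h : CharpolyCompatibleOn F f S)
    (h0 : 0 ∈ S) (hF0 : F 0 = 0) : f 0 = 0 := by
  have hzero : (0 : Matrix ι ι 𝕜).charpoly = ∏ _i : ι, (X - C 0) := by simp [charpoly_zero]
  have hprod := h 0 h0 _ hzero
  rw [hF0, hzero] at hprod
  simpa using congrArg (eval (f 0)) hprod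

theorem CharpolyCompatibleOn.hasFDerivAt_zero (h : CharpolyCompatibleOn F f S) (hS : S ∈ 𝓝 0)
    {L : Matrix ι ι 𝕜 →L[𝕜] Matrix ι ι 𝕜} (hF : HasFDerivAt F L 0) (hF0 : F 0 = 0)
    {α : 𝕜} (hf : HasDerivAt f α 0) (hf0 : f 0 = 0) :
    CharpolyCompatibleOn L (α * ·) univ := by
  intro V _ ζ hV
  have hfray : Tendsto (fun t i => t⁻¹ * f (t * ζ i)) (𝓝[≠] (0 : 𝕜)) (𝓝 fun i => α * ζ i) :=
    tendsto_pi_nhds.2 fun i => by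
      simpa [mul_comm] using hf.hasFDerivAt.tendsto_inv_smul_comp_smul hf0 (ζ i)
  have hsmall : ∀ᶠ t in 𝓝[≠] (0 : 𝕜), t • V ∈ S :=
    ((continuous_id.smul continuous_const).tendsto' 0 0 (zero_smul 𝕜 V)).eventually hS
      |>.filter_mono nhdsWithin_le_nhds
  refine charpoly_eq_prod_of_tendsto (hF.tendsto_inv_smul_comp_smul hF0 V) hfray ?_
  filter_upwards [hsmall, self_mem_nhdsWithin] with t htV (ht : t ≠ 0)
  exact charpoly_smul_of_eq_prod (inv_ne_zero ht) (h _ htV _ (charpoly_smul_of_eq_prod ht hV))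

theorem CharpolyCompatibleOn.charpoly_inv_smul [IsAlgClosed 𝕜] {α : 𝕜}
    (h : CharpolyCompatibleOn F (α * ·) univ) (hα : α ≠ 0) (V : Matrix ι ι 𝕜) :
    (α⁻¹ • F V).charpoly = V.charpoly := by
  obtain ⟨ζ, hζ⟩ := V.exists_charpoly_eq_prod
  rw [charpoly_smul_of_eq_prod (inv_ne_zero hα) (h V trivial ζ hζ), hζ]
  simp only [inv_mul_cancel_left₀ hα]

end Compatible

section DetPreserving

variable {𝕜 ι : Type*} [RCLike 𝕜] [Fintype ι] [DecidableEq ι]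

theorem Matrix.eq_zero_of_forall_det_add_eq {V : Matrix ι ι 𝕜}
    (h : ∀ W, (V + W).det = W.det) : V = 0 := by
  by_contra hV
  obtain ⟨x, hx⟩ : ∃ x, V *ᵥ x ≠ 0 := by
    by_contra! h0
    exact hV (Matrix.toLin'.injective (LinearMap.ext fun x => by simpa using h0 x))
  have hx0 : x ≠ 0 := by rintro rfl; simp at hx
  obtain ⟨A, hA⟩ := SeparatingDual.exists_continuousLinearEquiv_apply_eq (R := 𝕜) hx0 hx
  set U := LinearMap.toMatrix' (A : (ι → 𝕜) →ₗ[𝕜] (ι → 𝕜))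
  have hU : ∀ y, U *ᵥ y = A y := fun y => LinearMap.toMatrix'_mulVec _ y
  have hsing : (U - V).det = 0 :=
    exists_mulVec_eq_zero_iff.mp ⟨x, hx0, by rw [sub_mulVec, hU, hA, sub_self]⟩
  obtain ⟨y, hy0, hy⟩ := exists_mulVec_eq_zero_iff.mpr (by rwa [← h, add_sub_cancel] at hsing)
  exact hy0 (A.injective (by rw [← hU, hy, map_zero]))

theorem Matrix.injective_of_det_map_eq {T : Matrix ι ι 𝕜 →+ Matrix ι ι 𝕜}
    (hT : ∀ V, (T V).det = V.det) : Function.Injective T := by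
  refine (injective_iff_map_eq_zero T).2 fun V hV => eq_zero_of_forall_det_add_eq fun W => ?_
  rw [← hT, ← hT W, map_add, hV, zero_add]

end DetPreserving

theorem derivative_at_zero_isomorphism_general (n : ℕ) (hn : 2 ≤ n)
    (F : Matrix (Fin n) (Fin n) ℂ → Matrix (Fin n) (Fin n) ℂ)
    (hFhol : DifferentiableOn ℂ F (specBall n))
    (hF0 : F 0 = 0)
    (f : ℂ → ℂ)
    (hfhol : DifferentiableOn ℂ f (Metric.ball 0 1))
    (hf' : deriv f 0 ≠ 0)
    (hcompat : ∀ A ∈ specBall n, ∀ ζ : Fin n → ℂ,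
      A.charpoly = ∏ i, (X - C (ζ i)) →
      (F A).charpoly = ∏ i, (X - C (f (ζ i)))) :
    (∀ V : Matrix (Fin n) (Fin n) ℂ,
      ((deriv f 0)⁻¹ • fderiv ℂ F 0 V).charpoly = V.charpoly) ∧
    Function.Bijective (fderiv ℂ F 0) := by
  have : Nonempty (Fin n) := ⟨⟨0, by omega⟩⟩
  have hcompat : CharpolyCompatibleOn F f (specBall n) := hcompat
  have hΩ := specBall_mem_nhds_zero n
  have hF := (hFhol.differentiableAt hΩ).hasFDerivAt
  have hf := (hfhol.differentiableAt (Metric.ball_mem_nhds 0 one_pos)).hasDerivAt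
  have hf0 := hcompat.apply_zero (mem_of_mem_nhds hΩ) hF0
  have hcharpoly := (hcompat.hasFDerivAt_zero hΩ hF hF0 hf hf0).charpoly_inv_smul hf'
  set L := fderiv ℂ F 0
  have hinj : Function.Injective ((deriv f 0)⁻¹ • L : Matrix (Fin n) (Fin n) ℂ →+ _) :=
    injective_of_det_map_eq fun V => by
      rw [det_eq_sign_charpoly_coeff, det_eq_sign_charpoly_coeff V, ← hcharpoly V]
      rfl
  have hL : Function.Injective L := fun V W hVW => hinj (congrArg ((deriv f 0)⁻¹ • ·) hVW)
  exact ⟨hcharpoly, hL, LinearMap.surjective_of_injective (f := L.toLinearMap) hL⟩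

/-- if `F : Ω_n → Ω_n` (`n ≥ 2`) is holomorphic with `F(0) = 0`,
compatible with an `f ∈ O(𝔻,𝔻)` having `α := f'(0) ≠ 0`, then for every `V`
the matrix `α⁻¹ • F'(0)(V)` has the same characteristic polynomial as `V`;
consequently `F'(0)` is a linear isomorphism of `M_n(ℂ)`. -/
theorem derivative_at_zero_isomorphism (n : ℕ) (hn : 2 ≤ n)
    (F : Matrix (Fin n) (Fin n) ℂ → Matrix (Fin n) (Fin n) ℂ)
    (hFhol : DifferentiableOn ℂ F (specBall n))
    (hFmap : MapsTo F (specBall n) (specBall n))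
    (hF0 : F 0 = 0)
    (f : ℂ → ℂ)
    (hfhol : DifferentiableOn ℂ f (Metric.ball 0 1))
    (hfmap : MapsTo f (Metric.ball 0 1) (Metric.ball 0 1))
    (hf' : deriv f 0 ≠ 0)
    (hcompat : ∀ A ∈ specBall n, ∀ ζ : Fin n → ℂ,
      A.charpoly = ∏ i, (X - C (ζ i)) →
      (F A).charpoly = ∏ i, (X - C (f (ζ i)))) :
    (∀ V : Matrix (Fin n) (Fin n) ℂ,
      ((deriv f 0)⁻¹ • fderiv ℂ F 0 V).charpoly = V.charpoly) ∧
    Function.Bijective (fderiv ℂ F 0) :=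
  derivative_at_zero_isomorphism_general n hn F hFhol hF0 f hfhol hf' hcompat
end
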